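/- Pointwise interaction bound for the Aubin–Talenti profiles: Let D ≥ 3 and W(r) = (1 + r²/(D(D-2)))^{-(D-2)/2}. Then W(r) ≤ min(1, (D(D-2))^{(D-2)/2} r^{-(D-2)}) for all r > 0, and consequently for 0 < λ ≤ μ, ∫₀^∞ W_λ(r)^{4/(D-2)} W_λ(r) W_μ(r) r^{D-1} dr ≲ (λ/μ)^{(D-2)/2}, with constant depending only on D. -/

import Mathlib

open Real MeasureTheory Set

noncomputable section

/-- The Aubin–Talenti profile `W(r) = (1 + r²/(D(D-2)))^{-(D-2)/2}`. -/
def W (D : ℕ) (r : ℝ) : ℝ :=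
  (1 + r ^ 2 / ((D : ℝ) * ((D : ℝ) - 2))) ^ (-(((D : ℝ) - 2) / 2))

/-- The `Ḣ¹`-invariant rescaling `W_λ(r) = λ^{-(D-2)/2} W(r/λ)`. -/
def Wl (D : ℕ) (lam r : ℝ) : ℝ := lam ^ (-(((D : ℝ) - 2) / 2)) * W D (r / lam)

/-!
Since `1 + r²/A ≥ max 1 (r²/A)` with `A = D(D-2)`, both bounds on `W` are monotonicity of
`x ↦ x^{-(D-2)/2}`. For the integral, write `p = (D+2)/(D-2)`, so that the integrand is
`W_λ^p W_μ r^{D-1} ≤ μ^{-(D-2)/2} W_λ^p r^{D-1}`. The substitution `r = λ s` gives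
`∫ W_λ^p r^{D-1} dr = λ^{(D-2)/2} ∫ W^p s^{D-1} ds`, and the last integral converges because
`W^p s^{D-1} = O(s^{-3})` at infinity.
-/

open Filter Asymptotics

section ChangeOfScale

variable {E : Type*} [NormedAddCommGroup E]

theorem integral_comp_div_Ioi_zero [NormedSpace ℝ E] (F : ℝ → E) {lam : ℝ}
    (hlam : 0 < lam) :
    ∫ r in Ioi 0, F (r / lam) = lam • ∫ s in Ioi 0, F s := by
  simp_rw [div_eq_mul_inv]
  rw [integral_comp_mul_right_Ioi F 0 (inv_pos.mpr hlam), zero_mul, inv_inv]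

theorem MeasureTheory.IntegrableOn.comp_div_Ioi_zero {F : ℝ → E} (hF : IntegrableOn F (Ioi 0))
    {lam : ℝ} (hlam : 0 < lam) : IntegrableOn (fun r => F (r / lam)) (Ioi 0) := by
  simp_rw [div_eq_mul_inv]
  rwa [integrableOn_Ioi_comp_mul_right_iff F 0 (inv_pos.mpr hlam), zero_mul]

end ChangeOfScale

section Profile

variable {D : ℕ}

theorem one_le_W_base (hD : 2 ≤ D) (r : ℝ) :
    1 ≤ 1 + r ^ 2 / ((D : ℝ) * ((D : ℝ) - 2)) := by
  have hD' : (2 : ℝ) ≤ D := by exact_mod_cast hD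
  have : 0 ≤ r ^ 2 / ((D : ℝ) * ((D : ℝ) - 2)) :=
    div_nonneg (sq_nonneg r) (mul_nonneg (by linarith) (by linarith))
  linarith

theorem W_pos (hD : 2 ≤ D) (r : ℝ) : 0 < W D r :=
  rpow_pos_of_pos (one_pos.trans_le (one_le_W_base hD r)) _

theorem W_le_one (hD : 2 ≤ D) (r : ℝ) : W D r ≤ 1 := by
  have hD' : (2 : ℝ) ≤ D := by exact_mod_cast hD
  exact rpow_le_one_of_one_le_of_nonpos (one_le_W_base hD r) (by linarith)

theorem W_le_rpow (hD : 3 ≤ D) {r : ℝ} (hr : 0 < r) :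
    W D r ≤ ((D : ℝ) * ((D : ℝ) - 2)) ^ (((D : ℝ) - 2) / 2) * r ^ (-((D : ℝ) - 2)) := by
  have hD' : (3 : ℝ) ≤ D := by exact_mod_cast hD
  have hA : 0 < (D : ℝ) * ((D : ℝ) - 2) := by nlinarith
  calc W D r ≤ (r ^ 2 / ((D : ℝ) * ((D : ℝ) - 2))) ^ (-(((D : ℝ) - 2) / 2)) :=
        rpow_le_rpow_of_nonpos (by positivity) (le_add_of_nonneg_left zero_le_one)
          (by linarith)
    _ = ((D : ℝ) * ((D : ℝ) - 2)) ^ (((D : ℝ) - 2) / 2) * r ^ (-((D : ℝ) - 2)) := by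
        rw [div_rpow (sq_nonneg r) hA.le, rpow_neg hA.le, div_eq_mul_inv, inv_inv, mul_comm,
          ← rpow_natCast r 2, ← rpow_mul hr.le]
        push_cast
        ring_nf

theorem continuous_W (hD : 2 ≤ D) : Continuous (W D) :=
  (by fun_prop : Continuous fun r : ℝ => 1 + r ^ 2 / ((D : ℝ) * ((D : ℝ) - 2))).rpow_const
    fun r => Or.inl (one_pos.trans_le (one_le_W_base hD r)).ne'

theorem integrableOn_W_rpow_mul_rpow (hD : 3 ≤ D) {q k : ℝ} (hq : 0 ≤ q) (hk : 0 ≤ k)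
    (hqk : k + 1 < ((D : ℝ) - 2) * q) :
    IntegrableOn (fun s => W D s ^ q * s ^ k) (Ioi 0) := by
  have hD2 : 2 ≤ D := by omega
  have hD' : (3 : ℝ) ≤ D := by exact_mod_cast hD
  set K := ((D : ℝ) * ((D : ℝ) - 2)) ^ (((D : ℝ) - 2) / 2)
  have hcont : Continuous fun s => W D s ^ q * s ^ k :=
    ((continuous_W hD2).rpow_const fun _ => Or.inr hq).mul (continuous_rpow_const hk)
  have hO : (fun s => W D s ^ q * s ^ k) =O[atTop] fun s => s ^ (k - ((D : ℝ) - 2) * q) := by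
    refine IsBigO.of_bound (K ^ q) ?_
    filter_upwards [eventually_gt_atTop 0] with s hs
    have hK : 0 ≤ K := rpow_nonneg (mul_nonneg (by linarith) (by linarith)) _
    rw [norm_of_nonneg (mul_nonneg (rpow_nonneg (W_pos hD2 s).le _) (rpow_nonneg hs.le _)),
      norm_of_nonneg (rpow_nonneg hs.le _)]
    calc W D s ^ q * s ^ k ≤ (K * s ^ (-((D : ℝ) - 2))) ^ q * s ^ k := by
          gcongr
          · exact (W_pos hD2 s).le
          · exact W_le_rpow hD hs
      _ = K ^ q * s ^ (k - ((D : ℝ) - 2) * q) := by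
          rw [mul_rpow hK (rpow_nonneg hs.le _), ← rpow_mul hs.le, mul_assoc, ← rpow_add hs]
          ring_nf
  exact ((hcont.locallyIntegrable.locallyIntegrableOn _).integrableOn_of_isBigO_atTop hO
    (integrableAtFilter_rpow_atTop_iff.mpr (by linarith))).mono_set Ioi_subset_Ici_self

theorem Wl_pos (hD : 2 ≤ D) {lam : ℝ} (hlam : 0 < lam) (r : ℝ) : 0 < Wl D lam r :=
  mul_pos (rpow_pos_of_pos hlam _) (W_pos hD _)

theorem Wl_le (hD : 2 ≤ D) {lam : ℝ} (hlam : 0 < lam) (r : ℝ) :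
    Wl D lam r ≤ lam ^ (-(((D : ℝ) - 2) / 2)) :=
  mul_le_of_le_one_right (rpow_nonneg hlam.le _) (W_le_one hD _)

theorem Wl_rpow_mul_rpow (hD : 2 ≤ D) {lam r : ℝ} (hlam : 0 < lam) (hr : 0 ≤ r) (q k : ℝ) :
    Wl D lam r ^ q * r ^ k
      = lam ^ (k - ((D : ℝ) - 2) / 2 * q) * (W D (r / lam) ^ q * (r / lam) ^ k) := by
  rw [Wl, mul_rpow (rpow_nonneg hlam.le _) (W_pos hD _).le, ← rpow_mul hlam.le, neg_mul,
    rpow_neg hlam.le, div_rpow hr hlam.le, rpow_sub hlam]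
  field_simp

theorem Wl_interaction_le (hD : 3 ≤ D) {lam mu r : ℝ} (hlam : 0 < lam) (hmu : 0 < mu)
    (hr : 0 < r) :
    Wl D lam r ^ ((4 : ℝ) / ((D : ℝ) - 2)) * Wl D lam r * Wl D mu r * r ^ ((D : ℝ) - 1)
      ≤ mu ^ (-(((D : ℝ) - 2) / 2)) * lam ^ (((D : ℝ) - 2) / 2 - 1) *
          (W D (r / lam) ^ (((D : ℝ) + 2) / ((D : ℝ) - 2)) * (r / lam) ^ ((D : ℝ) - 1)) := by
  have hD2 : 2 ≤ D := by omega
  have hD' : (3 : ℝ) ≤ D := by exact_mod_cast hD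
  have hD2ne : (D : ℝ) - 2 ≠ 0 := by linarith
  set a := ((D : ℝ) - 2) / 2
  set p := ((D : ℝ) + 2) / ((D : ℝ) - 2)
  have hp : (4 : ℝ) / ((D : ℝ) - 2) + 1 = p := by simp only [p]; field_simp; ring
  have hexp : (D : ℝ) - 1 - a * p = a - 1 := by simp only [a, p]; field_simp; ring
  have hF : 0 ≤ W D (r / lam) ^ p * (r / lam) ^ ((D : ℝ) - 1) :=
    mul_nonneg (rpow_nonneg (W_pos hD2 _).le _) (rpow_nonneg (div_pos hr hlam).le _)
  calc Wl D lam r ^ ((4 : ℝ) / ((D : ℝ) - 2)) * Wl D lam r * Wl D mu r * r ^ ((D : ℝ) - 1)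
      = (Wl D lam r ^ p * r ^ ((D : ℝ) - 1)) * Wl D mu r := by
        rw [← hp, rpow_add (Wl_pos hD2 hlam r), rpow_one]
        ring
    _ = lam ^ (a - 1) * (W D (r / lam) ^ p * (r / lam) ^ ((D : ℝ) - 1)) * Wl D mu r := by
        rw [Wl_rpow_mul_rpow hD2 hlam hr.le, hexp]
    _ ≤ lam ^ (a - 1) * (W D (r / lam) ^ p * (r / lam) ^ ((D : ℝ) - 1)) * mu ^ (-a) := by
        gcongr
        exact Wl_le hD2 hmu r
    _ = _ := by ring

theorem integral_Wl_interaction_le (hD : 3 ≤ D) {lam mu : ℝ} (hlam : 0 < lam) (hmu : 0 < mu) :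
    ∫ r in Ioi 0,
        Wl D lam r ^ ((4 : ℝ) / ((D : ℝ) - 2)) * Wl D lam r * Wl D mu r * r ^ ((D : ℝ) - 1)
      ≤ (lam / mu) ^ (((D : ℝ) - 2) / 2) *
          ∫ s in Ioi 0, W D s ^ (((D : ℝ) + 2) / ((D : ℝ) - 2)) * s ^ ((D : ℝ) - 1) := by
  have hD2 : 2 ≤ D := by omega
  have hD' : (3 : ℝ) ≤ D := by exact_mod_cast hD
  set a := ((D : ℝ) - 2) / 2
  set F := fun s => W D s ^ (((D : ℝ) + 2) / ((D : ℝ) - 2)) * s ^ ((D : ℝ) - 1)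
  have hF : IntegrableOn F (Ioi 0) :=
    integrableOn_W_rpow_mul_rpow hD (div_nonneg (by linarith) (by linarith)) (by linarith)
      (by rw [mul_div_cancel₀ _ (by linarith)]; linarith)
  have hnonneg : ∀ r ∈ Ioi (0 : ℝ),
      0 ≤ Wl D lam r ^ ((4 : ℝ) / ((D : ℝ) - 2)) * Wl D lam r * Wl D mu r
        * r ^ ((D : ℝ) - 1) :=
    fun r hr => by
      have := Wl_pos hD2 hlam r
      have := Wl_pos hD2 hmu r
      have : (0 : ℝ) < r := hr
      positivity
  calc _ ≤ ∫ r in Ioi 0, mu ^ (-a) * lam ^ (a - 1) * F (r / lam) :=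
        integral_mono_of_nonneg ((ae_restrict_mem measurableSet_Ioi).mono hnonneg)
          ((hF.comp_div_Ioi_zero hlam).const_mul _)
          ((ae_restrict_mem measurableSet_Ioi).mono fun _ hr =>
            Wl_interaction_le hD hlam hmu hr)
    _ = mu ^ (-a) * lam ^ (a - 1) * (lam * ∫ s in Ioi 0, F s) := by
        rw [integral_const_mul, integral_comp_div_Ioi_zero F hlam, smul_eq_mul]
    _ = (lam / mu) ^ a * ∫ s in Ioi 0, F s := by
        rw [div_rpow hlam.le hmu.le, rpow_neg hmu.le, rpow_sub_one hlam.ne']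
        field_simp

end Profile

/-- Pointwise bound `W(r) ≤ min(1, (D(D-2))^{(D-2)/2} r^{-(D-2)})` and the interaction
estimate `∫₀^∞ W_λ^{4/(D-2)} W_λ W_μ r^{D-1} dr ≲_D (λ/μ)^{(D-2)/2}` for `0 < λ ≤ μ`. -/
theorem stmt15 (D : ℕ) (hD : 3 ≤ D) :
    (∀ r > (0 : ℝ), W D r
        ≤ min 1 (((D : ℝ) * ((D : ℝ) - 2)) ^ (((D : ℝ) - 2) / 2) * r ^ (-((D : ℝ) - 2)))) ∧
    ∃ C > (0 : ℝ), ∀ lam mu : ℝ, 0 < lam → lam ≤ mu →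
      (∫ r in Ioi (0 : ℝ),
          (Wl D lam r) ^ ((4 : ℝ) / ((D : ℝ) - 2)) * Wl D lam r * Wl D mu r
            * r ^ ((D : ℝ) - 1))
        ≤ C * (lam / mu) ^ (((D : ℝ) - 2) / 2) := by
  have hD2 : 2 ≤ D := by omega
  set I := ∫ s in Ioi (0 : ℝ), W D s ^ (((D : ℝ) + 2) / ((D : ℝ) - 2)) * s ^ ((D : ℝ) - 1)
  have hI : 0 ≤ I := setIntegral_nonneg measurableSet_Ioi fun s hs =>
    mul_nonneg (rpow_nonneg (W_pos hD2 s).le _) (rpow_nonneg (le_of_lt hs) _)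
  refine ⟨fun r hr => le_min (W_le_one hD2 r) (W_le_rpow hD hr), I + 1, by linarith,
    fun lam mu hlam hlm => ?_⟩
  calc _ ≤ (lam / mu) ^ (((D : ℝ) - 2) / 2) * I :=
        integral_Wl_interaction_le hD hlam (hlam.trans_le hlm)
    _ ≤ (I + 1) * (lam / mu) ^ (((D : ℝ) - 2) / 2) := by
        rw [mul_comm]
        exact mul_le_mul_of_nonneg_right (by linarith)
          (rpow_nonneg (div_pos hlam (hlam.trans_le hlm)).le _)
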